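/- In an ẅ-regular T1 space X, every infinite subset I ⊆ X contains an infinite subset D that is strictly discrete in X (there exist pairwise disjoint open neighborhoods of the points of D). -/

import Mathlib

/-!
If the infinite set `I` has an accumulation point `x`, then `X` is Hausdorff (apply
ẅ-regularity to singletons), and one peels off points of `I` one at a time: separate a point
`d n ≠ x` of `I` in the current neighbourhood `W n` of `x` from `x`, and continue inside the
neighbourhood of `x` obtained. Otherwise a sequence `f` of distinct points of `I` has closed
discrete tails `f '' (n, ∞)`; separating `f n` from its tail by `V n` and `U n`, the sets
`V n ∩ ⋂_{m < n} U m` are pairwise disjoint. Both constructions produce open sets `O n ∋ d n`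
inside a decreasing sequence `W n` with `O n` disjoint from `W (n + 1)`.
-/

open Filter Topology

section

open Set Function

variable {X : Type*} [TopologicalSpace X]

def WRegularSpace (X : Type*) [TopologicalSpace X] : Prop :=
  ∀ F : Set X, IsClosed F → (∀ x : X, ¬ AccPt x (𝓟 F)) →
    ∀ x ∉ F, ∃ U V : Set X, IsOpen U ∧ IsOpen V ∧ F ⊆ U ∧ x ∈ V ∧ Disjoint U V

def IsStrictlyDiscrete (D : Set X) : Prop :=
  ∃ O : X → Set X, (∀ d ∈ D, IsOpen (O d) ∧ d ∈ O d) ∧ D.PairwiseDisjoint O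

lemma isClosed_of_forall_not_accPt {S : Set X} (h : ∀ x, ¬ AccPt x (𝓟 S)) : IsClosed S :=
  (isClosed_and_discrete_iff.2 fun x => disjoint_iff.2 (not_neBot.1 (h x))).1

lemma not_accPt_singleton [T1Space X] (x y : X) : ¬ AccPt x (𝓟 {y}) := by
  rw [accPt_iff_nhds]
  intro h
  obtain rfl | hxy := eq_or_ne x y
  · obtain ⟨z, ⟨-, rfl⟩, hzx⟩ := h univ univ_mem
    exact hzx rfl
  · obtain ⟨z, ⟨hzy, rfl⟩, -⟩ := h {y}ᶜ (isOpen_compl_singleton.mem_nhds hxy)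
    exact hzy rfl

lemma WRegularSpace.t2Space [T1Space X] (hX : WRegularSpace X) : T2Space X := by
  refine ⟨fun x y hxy => ?_⟩
  obtain ⟨U, V, hU, hV, hxU, hyV, hUV⟩ :=
    hX {x} isClosed_singleton (fun z => not_accPt_singleton z x) y (Ne.symm hxy)
  exact ⟨U, V, hU, hV, hxU rfl, hyV, hUV⟩

lemma pairwise_disjoint_of_antitone {α ι : Type*} [LinearOrder ι] [SuccOrder ι] {W O : ι → Set α}
    (hW : Antitone W) (hOW : ∀ n, O n ⊆ W n) (hdisj : ∀ n, Disjoint (O n) (W (Order.succ n))) :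
    Pairwise (Disjoint on O) :=
  (pairwise_disjoint_on O).2 fun _ _ hmn =>
    (hdisj _).mono_right ((hOW _).trans (hW (Order.succ_le_of_lt hmn)))

lemma injective_of_pairwise_disjoint {α ι : Type*} {d : ι → α} {O : ι → Set α}
    (hd : ∀ i, d i ∈ O i) (hO : Pairwise (Disjoint on O)) : Injective d := by
  intro i j hij
  by_contra hne
  exact disjoint_left.1 (hO hne) (hd i) (hij ▸ hd j)

lemma isStrictlyDiscrete_range {ι : Type*} {d : ι → X} {O : ι → Set X} (hO : ∀ i, IsOpen (O i))
    (hd : ∀ i, d i ∈ O i) (hdisj : Pairwise (Disjoint on O)) : IsStrictlyDiscrete (range d) := by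
  have hinj := injective_of_pairwise_disjoint hd hdisj
  have hO' : ∀ i, ⋃ (j) (_ : d j = d i), O j = O i := fun i => by simp [hinj.eq_iff]
  refine ⟨fun y => ⋃ (j) (_ : d j = y), O j, ?_, ?_⟩
  · rintro _ ⟨i, rfl⟩
    simpa only [hO' i] using ⟨hO i, hd i⟩
  · rintro _ ⟨i, rfl⟩ _ ⟨j, rfl⟩ hne
    simpa only [onFun, hO' i, hO' j] using hdisj fun h => hne (congrArg d h)

lemma exists_infinite_isStrictlyDiscrete_of_antitone {S : Set X} {d : ℕ → X}
    {O W : ℕ → Set X} (hdS : ∀ n, d n ∈ S) (hO : ∀ n, IsOpen (O n)) (hd : ∀ n, d n ∈ O n)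
    (hW : Antitone W) (hOW : ∀ n, O n ⊆ W n) (hdisj : ∀ n, Disjoint (O n) (W (n + 1))) :
    ∃ D ⊆ S, D.Infinite ∧ IsStrictlyDiscrete D := by
  have hpair := pairwise_disjoint_of_antitone hW hOW hdisj
  exact ⟨range d, range_subset_iff.2 hdS,
    infinite_range_of_injective (injective_of_pairwise_disjoint hd hpair),
    isStrictlyDiscrete_range hO hd hpair⟩

lemma exists_infinite_isStrictlyDiscrete_of_accPt [T2Space X] {S : Set X} {x : X}
    (hx : AccPt x (𝓟 S)) : ∃ D ⊆ S, D.Infinite ∧ IsStrictlyDiscrete D := by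
  have step : ∀ W : {W : Set X // W ∈ 𝓝 x}, ∃ (d : X) (O : Set X) (W' : {W : Set X // W ∈ 𝓝 x}),
      d ∈ S ∧ IsOpen O ∧ d ∈ O ∧ O ⊆ W ∧ (W' : Set X) ⊆ W ∧ Disjoint O W' := by
    rintro ⟨W, hW⟩
    obtain ⟨y, ⟨hyW, hyS⟩, hyx⟩ := accPt_iff_nhds.1 hx (interior W) (interior_mem_nhds.2 hW)
    obtain ⟨U, V, hU, hV, hxU, hyV, hUV⟩ := t2_separation hyx.symm
    exact ⟨y, V ∩ interior W, ⟨U ∩ W, inter_mem (hU.mem_nhds hxU) hW⟩, hyS,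
      hV.inter isOpen_interior, ⟨hyV, hyW⟩, inter_subset_right.trans interior_subset,
      inter_subset_right, hUV.symm.mono inter_subset_left inter_subset_left⟩
  choose d O next hdS hO hd hOW hnext hdisj using step
  let W : ℕ → {W : Set X // W ∈ 𝓝 x} := fun n => next^[n] ⟨univ, univ_mem⟩
  refine exists_infinite_isStrictlyDiscrete_of_antitone (d := fun n => d (W n))
    (O := fun n => O (W n)) (W := fun n => W n) (fun _ => hdS _) (fun _ => hO _) (fun _ => hd _)
    (antitone_nat_of_succ_le fun n => ?_) (fun _ => hOW _) (fun n => ?_)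
  · simpa only [W, iterate_succ_apply'] using hnext (W n)
  · simpa only [W, iterate_succ_apply'] using hdisj (W n)

lemma exists_infinite_isStrictlyDiscrete_of_forall_not_accPt (hX : WRegularSpace X) {S : Set X}
    (hS : S.Infinite) (hacc : ∀ x, ¬ AccPt x (𝓟 S)) :
    ∃ D ⊆ S, D.Infinite ∧ IsStrictlyDiscrete D := by
  set f : ℕ → X := fun n => hS.natEmbedding S n
  have hfS : ∀ n, f n ∈ S := fun n => (hS.natEmbedding S n).2
  have hf : Injective f := Subtype.val_injective.comp (hS.natEmbedding S).injective
  have htail : ∀ n x, ¬ AccPt x (𝓟 (f '' Ioi n)) := fun n x h =>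
    hacc x (h.mono (principal_mono.2 (image_subset_iff.2 fun m _ => hfS m)))
  have hnot : ∀ n, f n ∉ f '' Ioi n := fun n ⟨m, hm, hfm⟩ => lt_irrefl n (hf hfm ▸ hm)
  choose U V hU hV hTU hfV hUV using fun n =>
    hX _ (isClosed_of_forall_not_accPt (htail n)) (htail n) (f n) (hnot n)
  let W : ℕ → Set X := fun n => ⋂ m ∈ Iio n, U m
  exact exists_infinite_isStrictlyDiscrete_of_antitone (O := fun n => V n ∩ W n) hfS
    (fun n => (hV n).inter ((finite_Iio n).isOpen_biInter fun m _ => hU m))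
    (fun n => ⟨hfV n, mem_iInter₂.2 fun m hm => hTU m ⟨n, hm, rfl⟩⟩)
    (fun _ _ hmn => biInter_subset_biInter_left (Iio_subset_Iio hmn)) (fun _ => inter_subset_right)
    (fun n => (hUV n).symm.mono inter_subset_left (biInter_subset_of_mem (lt_add_one n)))

end

/-- In a ẅ-regular T1 space `X`, every infinite `I ⊆ X` contains an infinite
subset `D` that is strictly discrete in `X`. -/
theorem stmt7 {X : Type*} [TopologicalSpace X] [T1Space X]
    (hreg : ∀ F : Set X, IsClosed F → (∀ x : X, ¬ AccPt x (𝓟 F)) →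
      ∀ x ∉ F, ∃ U V : Set X, IsOpen U ∧ IsOpen V ∧ F ⊆ U ∧ x ∈ V ∧
        Disjoint U V)
    (I : Set X) (hI : I.Infinite) :
    ∃ D ⊆ I, D.Infinite ∧
      ∃ O : X → Set X, (∀ d ∈ D, IsOpen (O d) ∧ d ∈ O d) ∧
        D.PairwiseDisjoint O := by
  by_cases hacc : ∃ x, AccPt x (𝓟 I)
  · obtain ⟨x, hx⟩ := hacc
    have : T2Space X := WRegularSpace.t2Space hreg
    exact exists_infinite_isStrictlyDiscrete_of_accPt hx
  · exact exists_infinite_isStrictlyDiscrete_of_forall_not_accPt hreg hI (not_exists.1 hacc)
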